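/- arXiv:2208.13945 — 3 statements merged into one kernel-verified Lean document; each statement's English description precedes it below -/
import Mathlib

section
/- Let M ∈ ℝ, S > 0, and α ∈ C^∞(ℝ) be such that |M|·∫₀^s |α(σ)| dσ < 1 for all s ∈ [0, S]. Set τ(s) = ∫₀^s α(σ) dσ, and define U(s,θ) = u_{M,τ(s)}(θ), where u_{M,τ} is the unique function with u_{M,τ}(θ) = M·cos(θ − τ·u_{M,τ}(θ)). Then U is continuously differentiable on [0,S] × ℝ, U(0,θ) = M·cos θ, and U solves Burgers' equation ∂_s U(s,θ) + α(s)·U(s,θ)·∂_θ U(s,θ) = 0 on [0,S] × ℝ. -/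
open Real ContinuousLinearMap

set_option maxHeartbeats 1000000

lemma burgers_aux_cos_lip (a b : ℝ) : |Real.cos a - Real.cos b| ≤ |a - b| := by
  rw [Real.cos_sub_cos, abs_mul, abs_mul]
  have h1 : |Real.sin ((a + b) / 2)| ≤ 1 := abs_le.2 ⟨Real.neg_one_le_sin _, Real.sin_le_one _⟩
  have h2 : |Real.sin ((a - b) / 2)| ≤ |(a - b) / 2| := Real.abs_sin_le_abs
  calc |(-2 : ℝ)| * |Real.sin ((a + b) / 2)| * |Real.sin ((a - b) / 2)|
      ≤ 2 * 1 * |(a - b) / 2| := by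
        apply mul_le_mul _ h2 (abs_nonneg _) (by norm_num)
        rw [show |(-2:ℝ)| = 2 by norm_num]
        nlinarith [abs_nonneg (Real.sin ((a+b)/2))]
    _ = |a - b| := by rw [abs_div, abs_two]; ring


lemma burgers_aux_uniq (M t θ v w : ℝ) (h : |M * t| < 1)
    (hv : v = M * Real.cos (θ - t * v)) (hw : w = M * Real.cos (θ - t * w)) : v = w := by
  have hlip := burgers_aux_cos_lip (θ - t * v) (θ - t * w)
  have e1 : v - w = M * (Real.cos (θ - t * v) - Real.cos (θ - t * w)) := by
    conv_lhs => rw [hv, hw]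
    ring
  have e2 : |v - w| ≤ |M| * |(θ - t * v) - (θ - t * w)| := by
    rw [e1, abs_mul]
    exact mul_le_mul_of_nonneg_left hlip (abs_nonneg _)
  have e3 : |(θ - t * v) - (θ - t * w)| = |t| * |v - w| := by
    rw [show (θ - t * v) - (θ - t * w) = t * (w - v) by ring, abs_mul, abs_sub_comm]
  rw [abs_mul] at h
  by_contra hne
  have hpos : 0 < |v - w| := abs_pos.2 (sub_ne_zero.2 hne)
  rw [e3] at e2
  nlinarith [abs_nonneg M, abs_nonneg t]

lemma burgers_aux_local (M : ℝ) (u : ℝ → ℝ → ℝ)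
    (hu : ∀ τ θ : ℝ, |M * τ| < 1 → u τ θ = M * Real.cos (θ - τ * u τ θ))
    {p₀ : ℝ × ℝ} (hp : |M * p₀.1| < 1) :
    ContDiffAt ℝ 1 (fun p : ℝ × ℝ => u p.1 p.2) p₀ := by
  obtain ⟨τ₀, θ₀⟩ := p₀
  simp only at hp ⊢
  set u₀ : ℝ := u τ₀ θ₀ with hu₀
  set w₀ : ℝ := θ₀ - τ₀ * u₀ with hw₀
  set s₀ : ℝ := Real.sin w₀ with hs₀
  have habs : |M * τ₀ * s₀| ≤ |M * τ₀| := by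
    rw [abs_mul]
    nlinarith [abs_nonneg (M * τ₀), abs_le.2 ⟨Real.neg_one_le_sin w₀, Real.sin_le_one w₀⟩,
      abs_nonneg s₀]
  have hc : (0:ℝ) < 1 - M * τ₀ * s₀ := by
    have := abs_lt.1 (lt_of_le_of_lt habs hp)
    linarith [this.2]
  -- the map Φ
  set Φ : (ℝ × ℝ) × ℝ → (ℝ × ℝ) × ℝ :=
    fun q => (q.1, q.2 - M * Real.cos (q.1.2 - q.1.1 * q.2)) with hΦdef
  set x₀ : (ℝ × ℝ) × ℝ := ((τ₀, θ₀), u₀) with hx₀def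
  have hΦc : ContDiffAt ℝ 1 Φ x₀ := by
    apply ContDiffAt.prodMk
    · exact contDiffAt_fst
    · exact (contDiffAt_snd).sub
        ((((Real.contDiff_cos.contDiffAt).comp _
          (((contDiffAt_snd.comp _ contDiffAt_fst)).sub
            ((contDiffAt_fst.comp _ contDiffAt_fst).mul contDiffAt_snd))).const_smul M).congr_of_eventuallyEq
          (by filter_upwards with q; simp [smul_eq_mul]))
  -- continuous linear maps
  set K1 : (ℝ × ℝ) × ℝ →L[ℝ] ℝ × ℝ := ContinuousLinearMap.fst ℝ (ℝ × ℝ) ℝ with hK1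
  set Kz : (ℝ × ℝ) × ℝ →L[ℝ] ℝ := ContinuousLinearMap.snd ℝ (ℝ × ℝ) ℝ with hKz
  set Kτ : (ℝ × ℝ) × ℝ →L[ℝ] ℝ := (ContinuousLinearMap.fst ℝ ℝ ℝ).comp K1 with hKτ
  set Kθ : (ℝ × ℝ) × ℝ →L[ℝ] ℝ := (ContinuousLinearMap.snd ℝ ℝ ℝ).comp K1 with hKθ
  set a : ℝ := -(M * s₀ * u₀) with ha
  set b : ℝ := M * s₀ with hb
  set c : ℝ := 1 - M * τ₀ * s₀ with hcdef
  have hcne : c ≠ 0 := ne_of_gt hc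
  set A : (ℝ × ℝ) × ℝ →L[ℝ] (ℝ × ℝ) × ℝ := K1.prod (a • Kτ + b • Kθ + c • Kz) with hA
  set B : (ℝ × ℝ) × ℝ →L[ℝ] (ℝ × ℝ) × ℝ :=
    K1.prod ((-a/c) • Kτ + (-b/c) • Kθ + (1/c) • Kz) with hB
  have hBA : Function.LeftInverse B A := by
    intro q
    simp only [hA, hB, hKτ, hKθ, hKz, hK1, ContinuousLinearMap.prod_apply,
      ContinuousLinearMap.add_apply, ContinuousLinearMap.smul_apply,
      ContinuousLinearMap.coe_comp', Function.comp_apply,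
      ContinuousLinearMap.coe_fst', ContinuousLinearMap.coe_snd', smul_eq_mul]
    refine Prod.ext rfl ?_
    field_simp
    ring
  have hAB : Function.RightInverse B A := by
    intro q
    simp only [hA, hB, hKτ, hKθ, hKz, hK1, ContinuousLinearMap.prod_apply,
      ContinuousLinearMap.add_apply, ContinuousLinearMap.smul_apply,
      ContinuousLinearMap.coe_comp', Function.comp_apply,
      ContinuousLinearMap.coe_fst', ContinuousLinearMap.coe_snd', smul_eq_mul]
    refine Prod.ext rfl ?_
    field_simp
    ring
  set E : ((ℝ × ℝ) × ℝ) ≃L[ℝ] ((ℝ × ℝ) × ℝ) :=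
    ContinuousLinearEquiv.equivOfInverse A B hBA hAB with hE
  -- derivative of Φ
  have hτf : HasFDerivAt (fun q : (ℝ × ℝ) × ℝ => q.1.1) Kτ x₀ :=
    (hasFDerivAt_fst (𝕜 := ℝ) (p := x₀.1)).comp x₀ (hasFDerivAt_fst)
  have hθf : HasFDerivAt (fun q : (ℝ × ℝ) × ℝ => q.1.2) Kθ x₀ :=
    (hasFDerivAt_snd (𝕜 := ℝ) (p := x₀.1)).comp x₀ (hasFDerivAt_fst)
  have hzf : HasFDerivAt (fun q : (ℝ × ℝ) × ℝ => q.2) Kz x₀ := hasFDerivAt_snd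
  have hmul : HasFDerivAt (fun q : (ℝ × ℝ) × ℝ => q.1.1 * q.2)
      (x₀.1.1 • Kz + x₀.2 • Kτ) x₀ := hτf.mul hzf
  have hinner : HasFDerivAt (fun q : (ℝ × ℝ) × ℝ => q.1.2 - q.1.1 * q.2)
      (Kθ - (x₀.1.1 • Kz + x₀.2 • Kτ)) x₀ := hθf.sub hmul
  have hval : x₀.1.2 - x₀.1.1 * x₀.2 = w₀ := by simp [hx₀def, hw₀]
  have hcos : HasFDerivAt (fun q : (ℝ × ℝ) × ℝ => Real.cos (q.1.2 - q.1.1 * q.2))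
      ((-s₀) • (Kθ - (x₀.1.1 • Kz + x₀.2 • Kτ))) x₀ := by
    have := (Real.hasDerivAt_cos (x₀.1.2 - x₀.1.1 * x₀.2)).comp_hasFDerivAt x₀ hinner
    rwa [hval] at this
  have hΦ2 : HasFDerivAt (fun q : (ℝ × ℝ) × ℝ => q.2 - M * Real.cos (q.1.2 - q.1.1 * q.2))
      (Kz - M • ((-s₀) • (Kθ - (x₀.1.1 • Kz + x₀.2 • Kτ)))) x₀ :=
    hzf.sub (hcos.const_mul M)
  have hΦd : HasFDerivAt Φ (E : ((ℝ × ℝ) × ℝ) →L[ℝ] ((ℝ × ℝ) × ℝ)) x₀ := by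
    have h := (hasFDerivAt_fst (𝕜 := ℝ) (p := x₀)).prodMk hΦ2
    have heqA : (E : ((ℝ × ℝ) × ℝ) →L[ℝ] ((ℝ × ℝ) × ℝ)) =
        K1.prod (Kz - M • ((-s₀) • (Kθ - (x₀.1.1 • Kz + x₀.2 • Kτ)))) := by
      refine ContinuousLinearMap.ext fun v => ?_
      have : (E : ((ℝ × ℝ) × ℝ) →L[ℝ] ((ℝ × ℝ) × ℝ)) = A := rfl
      rw [this]
      simp only [hA, hKτ, hKθ, hKz, hK1, ContinuousLinearMap.prod_apply,
        ContinuousLinearMap.add_apply, ContinuousLinearMap.sub_apply,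
        ContinuousLinearMap.smul_apply, ContinuousLinearMap.coe_comp', Function.comp_apply,
        ContinuousLinearMap.coe_fst', ContinuousLinearMap.coe_snd', smul_eq_mul]
      refine Prod.ext rfl ?_
      simp only [ha, hb, hcdef, hx₀def]
      ring
    rw [heqA]
    exact h
  -- local inverse
  have hstrict : HasStrictFDerivAt Φ (E : ((ℝ × ℝ) × ℝ) →L[ℝ] ((ℝ × ℝ) × ℝ)) x₀ :=
    hΦc.hasStrictFDerivAt' hΦd one_ne_zero
  set g : (ℝ × ℝ) × ℝ → (ℝ × ℝ) × ℝ := hstrict.localInverse Φ E x₀ with hgdef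
  have hΦx₀ : Φ x₀ = ((τ₀, θ₀), 0) := by
    simp only [hΦdef, hx₀def]
    rw [show θ₀ - τ₀ * u₀ = w₀ from rfl, ← hu τ₀ θ₀ hp]
    simp [hu₀]
  have hg : ContDiffAt ℝ 1 g (Φ x₀) := hΦc.to_localInverse hΦd one_ne_zero
  have hright : ∀ᶠ y in nhds (Φ x₀), Φ (g y) = y := hstrict.eventually_right_inverse
  -- G and eventual equality
  set G : ℝ × ℝ → ℝ := fun p => (g (p, 0)).2 with hG
  have hGsm : ContDiffAt ℝ 1 G (τ₀, θ₀) := by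
    have hemb : ContDiffAt ℝ 1 (fun p : ℝ × ℝ => ((p, (0:ℝ)) : (ℝ × ℝ) × ℝ)) (τ₀, θ₀) :=
      contDiffAt_id.prodMk contDiffAt_const
    have hg' : ContDiffAt ℝ 1 g ((τ₀, θ₀), (0:ℝ)) := by rwa [hΦx₀] at hg
    exact contDiffAt_snd.comp (τ₀, θ₀) (hg'.comp (τ₀, θ₀) hemb)
  have hMev : ∀ᶠ p : ℝ × ℝ in nhds (τ₀, θ₀), |M * p.1| < 1 := by
    have hcont : Continuous fun p : ℝ × ℝ => |M * p.1| := by fun_prop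
    exact hcont.continuousAt.eventually_lt continuousAt_const hp
  have htend : Filter.Tendsto (fun p : ℝ × ℝ => ((p, (0:ℝ)) : (ℝ × ℝ) × ℝ))
      (nhds (τ₀, θ₀)) (nhds (Φ x₀)) := by
    rw [hΦx₀]
    exact (continuous_id.prodMk continuous_const).continuousAt
  have h1 : ∀ᶠ p : ℝ × ℝ in nhds (τ₀, θ₀), Φ (g (p, 0)) = (p, 0) := htend.eventually hright
  have heq : (fun p : ℝ × ℝ => u p.1 p.2) =ᶠ[nhds (τ₀, θ₀)] G := by
    filter_upwards [h1, hMev] with p hp1 hp2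
    obtain ⟨e1, e2⟩ := Prod.ext_iff.1 hp1
    simp only [hΦdef] at e1 e2
    rw [e1] at e2
    have e3 : (g (p, 0)).2 = M * Real.cos (p.2 - p.1 * (g (p, 0)).2) := by
      have : (g (p, 0)).2 - M * Real.cos (p.2 - p.1 * (g (p, 0)).2) = 0 := by
        simpa [e1] using e2
      linarith
    exact burgers_aux_uniq M p.1 p.2 _ _ hp2 (hu p.1 p.2 hp2) e3
  exact hGsm.congr_of_eventuallyEq heq

lemma burgers_aux_fderiv (M : ℝ) (u : ℝ → ℝ → ℝ)
    (hu : ∀ τ θ : ℝ, |M * τ| < 1 → u τ θ = M * Real.cos (θ - τ * u τ θ))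
    {p₀ : ℝ × ℝ} (hp : |M * p₀.1| < 1) :
    fderiv ℝ (fun p : ℝ × ℝ => u p.1 p.2) p₀ (1, u p₀.1 p₀.2) = 0 := by
  have hsm := burgers_aux_local M u hu hp
  have hdiff : DifferentiableAt ℝ (fun p : ℝ × ℝ => u p.1 p.2) p₀ :=
    hsm.differentiableAt one_ne_zero
  set L := fderiv ℝ (fun p : ℝ × ℝ => u p.1 p.2) p₀ with hLdef
  have hL : HasFDerivAt (fun p : ℝ × ℝ => u p.1 p.2) L p₀ := hdiff.hasFDerivAt
  set u₀ : ℝ := u p₀.1 p₀.2 with hu₀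
  set w₀ : ℝ := p₀.2 - p₀.1 * u₀ with hw₀
  set s₀ : ℝ := Real.sin w₀ with hs₀
  set Kτ : ℝ × ℝ →L[ℝ] ℝ := ContinuousLinearMap.fst ℝ ℝ ℝ with hKτ
  set Kθ : ℝ × ℝ →L[ℝ] ℝ := ContinuousLinearMap.snd ℝ ℝ ℝ with hKθ
  have hmul : HasFDerivAt (fun p : ℝ × ℝ => p.1 * u p.1 p.2) (p₀.1 • L + u₀ • Kτ) p₀ :=
    (hasFDerivAt_fst).mul hL
  have hinner : HasFDerivAt (fun p : ℝ × ℝ => p.2 - p.1 * u p.1 p.2)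
      (Kθ - (p₀.1 • L + u₀ • Kτ)) p₀ := hasFDerivAt_snd.sub hmul
  have hcos : HasFDerivAt (fun p : ℝ × ℝ => Real.cos (p.2 - p.1 * u p.1 p.2))
      ((-s₀) • (Kθ - (p₀.1 • L + u₀ • Kτ))) p₀ :=
    by have := (Real.hasDerivAt_cos (p₀.2 - p₀.1 * u p₀.1 p₀.2)).comp_hasFDerivAt p₀ hinner; exact this
  have hR : HasFDerivAt (fun p : ℝ × ℝ => M * Real.cos (p.2 - p.1 * u p.1 p.2))
      (M • ((-s₀) • (Kθ - (p₀.1 • L + u₀ • Kτ)))) p₀ := hcos.const_mul M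
  have hMev : ∀ᶠ p : ℝ × ℝ in nhds p₀, |M * p.1| < 1 := by
    have hcont : Continuous fun p : ℝ × ℝ => |M * p.1| := by fun_prop
    exact hcont.continuousAt.eventually_lt continuousAt_const hp
  have heq : (fun p : ℝ × ℝ => u p.1 p.2) =ᶠ[nhds p₀]
      (fun p : ℝ × ℝ => M * Real.cos (p.2 - p.1 * u p.1 p.2)) := by
    filter_upwards [hMev] with p hp2
    exact hu p.1 p.2 hp2
  have hL2 : HasFDerivAt (fun p : ℝ × ℝ => u p.1 p.2)
      (M • ((-s₀) • (Kθ - (p₀.1 • L + u₀ • Kτ)))) p₀ := hR.congr_of_eventuallyEq heq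
  have hLeq : L = M • ((-s₀) • (Kθ - (p₀.1 • L + u₀ • Kτ))) := hL.unique hL2
  have hv := ContinuousLinearMap.ext_iff.1 hLeq ((1 : ℝ), u₀)
  simp only [ContinuousLinearMap.smul_apply, ContinuousLinearMap.sub_apply,
    ContinuousLinearMap.add_apply, hKτ, hKθ, ContinuousLinearMap.coe_fst',
    ContinuousLinearMap.coe_snd', smul_eq_mul] at hv
  set x : ℝ := L (1, u₀) with hx
  have hxeq : x = (M * p₀.1 * s₀) * x := by linear_combination hv
  have habs : |M * p₀.1 * s₀| ≤ |M * p₀.1| := by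
    rw [abs_mul]
    nlinarith [abs_nonneg (M * p₀.1),
      abs_le.2 ⟨Real.neg_one_le_sin w₀, Real.sin_le_one w₀⟩, abs_nonneg s₀]
  have hlt := abs_lt.1 (lt_of_le_of_lt habs hp)
  have : (1 - M * p₀.1 * s₀) * x = 0 := by linarith [hxeq]
  rcases mul_eq_zero.1 this with h | h
  · linarith [hlt.2]
  · exact h

/-- Let `M ∈ ℝ`, `S > 0`, and `α ∈ C^∞(ℝ)` with
`|M| * ∫₀^s |α| < 1` for all `s ∈ [0,S]` (the no-shock condition). Let `τ s = ∫₀^s α`,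
let `u τ θ` denote (for `|M * τ| < 1`) the unique solution of the implicit equation
`u = M * cos (θ - τ * u)`, and set `U s θ = u (τ s) θ`. Then `U` is continuously
differentiable on `[0,S] × ℝ`, has initial value `M * cos θ`, and solves Burgers' equation
`∂ₛU + α U ∂_θU = 0` there. -/
theorem implicit_solution_solves_burgers (M S : ℝ) (hS : 0 < S)
    (α : ℝ → ℝ) (hα : ContDiff ℝ (⊤ : ℕ∞) α)
    (hns : ∀ s ∈ Set.Icc (0 : ℝ) S, |M| * (∫ σ in (0:ℝ)..s, |α σ|) < 1)
    (u : ℝ → ℝ → ℝ)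
    (hu : ∀ τ θ : ℝ, |M * τ| < 1 → u τ θ = M * Real.cos (θ - τ * u τ θ))
    (U : ℝ → ℝ → ℝ)
    (hU : ∀ s θ : ℝ, U s θ = u (∫ σ in (0:ℝ)..s, α σ) θ) :
    ContDiffOn ℝ 1 (fun q : ℝ × ℝ => U q.1 q.2) (Set.Icc 0 S ×ˢ Set.univ) ∧
    (∀ θ : ℝ, U 0 θ = M * Real.cos θ) ∧
    ∀ s ∈ Set.Icc (0 : ℝ) S, ∀ θ : ℝ,
      derivWithin (fun s' => U s' θ) (Set.Icc 0 S) s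
        + α s * U s θ * deriv (fun θ' => U s θ') θ = 0 := by
  have hcα : Continuous α := hα.continuous
  set τ : ℝ → ℝ := fun s => ∫ σ in (0:ℝ)..s, α σ with hτdef
  have hτd : ∀ s, HasDerivAt τ (α s) s := fun s =>
    intervalIntegral.integral_hasDerivAt_right (hcα.intervalIntegrable _ _)
      (hcα.stronglyMeasurableAtFilter _ _) hcα.continuousAt
  have hτ1 : ContDiff ℝ 1 τ := by
    refine contDiff_one_iff_deriv.2 ⟨fun s => (hτd s).differentiableAt, ?_⟩
    have : deriv τ = α := funext fun s => (hτd s).deriv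
    rw [this]; exact hcα
  have hns' : ∀ s ∈ Set.Icc (0:ℝ) S, |M * τ s| < 1 := by
    intro s hs
    have h1 : |τ s| ≤ ∫ σ in (0:ℝ)..s, |α σ| :=
      intervalIntegral.abs_integral_le_integral_abs hs.1
    calc |M * τ s| = |M| * |τ s| := abs_mul _ _
      _ ≤ |M| * ∫ σ in (0:ℝ)..s, |α σ| := mul_le_mul_of_nonneg_left h1 (abs_nonneg M)
      _ < 1 := hns s hs
  set V : Set ℝ := {s | |M * τ s| < 1} with hV
  have hVopen : IsOpen V :=
    isOpen_lt ((continuous_const.mul hτ1.continuous).abs) continuous_const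
  have hVsub : Set.Icc (0:ℝ) S ⊆ V := hns'
  have hUeq : (fun q : ℝ × ℝ => U q.1 q.2) = fun q : ℝ × ℝ => u (τ q.1) q.2 :=
    funext fun q => hU q.1 q.2
  have hmain : ContDiffOn ℝ 1 (fun q : ℝ × ℝ => U q.1 q.2) (V ×ˢ (Set.univ : Set ℝ)) := by
    intro q hq
    have h1 : ContDiffAt ℝ 1 (fun p : ℝ × ℝ => u p.1 p.2) (τ q.1, q.2) :=
      burgers_aux_local M u hu (p₀ := (τ q.1, q.2)) hq.1
    have h2 : ContDiffAt ℝ 1 (fun q' : ℝ × ℝ => ((τ q'.1, q'.2) : ℝ × ℝ)) q :=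
      (((hτ1.comp contDiff_fst).prodMk contDiff_snd).contDiffAt)
    have h3 := h1.comp q h2
    rw [hUeq]
    exact h3.contDiffWithinAt
  refine ⟨hmain.mono (Set.prod_mono hVsub (subset_refl _)), ?_, ?_⟩
  · intro θ
    rw [hU 0 θ]
    rw [show (∫ σ in (0:ℝ)..(0:ℝ), α σ) = 0 from intervalIntegral.integral_same]
    have h := hu 0 θ (by simp)
    simpa using h
  · intro s hs θ
    have hq1 : |M * τ s| < 1 := hns' s hs
    have hsm := burgers_aux_local M u hu (p₀ := (τ s, θ)) hq1
    set L := fderiv ℝ (fun p : ℝ × ℝ => u p.1 p.2) ((τ s, θ) : ℝ × ℝ) with hLdef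
    have hL : HasFDerivAt (fun p : ℝ × ℝ => u p.1 p.2) L ((τ s, θ) : ℝ × ℝ) :=
      (hsm.differentiableAt one_ne_zero).hasFDerivAt
    have hkey : L (1, u (τ s) θ) = 0 := burgers_aux_fderiv M u hu (p₀ := (τ s, θ)) hq1
    have hin : HasDerivAt (fun s' => ((τ s', θ) : ℝ × ℝ)) ((α s, 0) : ℝ × ℝ) s :=
      (hτd s).prodMk (hasDerivAt_const s θ)
    have hds : HasDerivAt (fun s' => u (τ s') θ) (L ((α s, 0) : ℝ × ℝ)) s :=
      by have := hL.comp_hasDerivAt s hin; exact this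
    have hds' : derivWithin (fun s' => U s' θ) (Set.Icc 0 S) s = L ((α s, 0) : ℝ × ℝ) := by
      have h : (fun s' => U s' θ) = fun s' => u (τ s') θ := funext fun s' => hU s' θ
      rw [h]
      exact hds.hasDerivWithinAt.derivWithin (uniqueDiffOn_Icc hS s hs)
    have hin2 : HasDerivAt (fun θ' => ((τ s, θ') : ℝ × ℝ)) ((0, 1) : ℝ × ℝ) θ :=
      (hasDerivAt_const θ (τ s)).prodMk (hasDerivAt_id θ)
    have hdθ : deriv (fun θ' => U s θ') θ = L ((0, 1) : ℝ × ℝ) := by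
      have h : (fun θ' => U s θ') = fun θ' => u (τ s) θ' := funext fun θ' => hU s θ'
      rw [h]
      exact (hL.comp_hasDerivAt θ hin2).deriv
    rw [hds', hdθ, hU s θ]
    have e1 : ((α s, (0:ℝ)) : ℝ × ℝ)
        = α s • ((1, u (τ s) θ) : ℝ × ℝ) + (-(α s * u (τ s) θ)) • ((0, 1) : ℝ × ℝ) := by
      simp [Prod.ext_iff]
    rw [e1, map_add, map_smul, map_smul, hkey]
    simp only [smul_eq_mul, mul_zero]
    ring
end

section
/- Let M ∈ ℝ and, for |τ| small enough that |M·τ| < 1, let u_{M,τ} : ℝ → ℝ be the unique function with u_{M,τ}(θ) = M·cos(θ − τ·u_{M,τ}(θ)). Then for each fixed θ ∈ ℝ, the map τ ↦ u_{M,τ}(θ) is differentiable at τ = 0, with u_{M,0}(θ) = M·cos θ and (d/dτ) u_{M,τ}(θ)|_{τ=0} = (M²/2)·sin(2θ). -/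
/-!
For `|M τ| < 1` the map `u ↦ M cos (θ - τ u)` is a contraction, so `u(τ) := u_{M,τ}(θ)` is its
unique fixed point, and `|u(τ)| ≤ |M|`. Hence `τ u(τ) → 0`, so `u` is continuous at `0`, so
`τ ↦ τ u(τ)` is differentiable at `0` with derivative `u(0) = M cos θ`. Differentiating
`u(τ) = M cos (θ - τ u(τ))` at `τ = 0` by the chain rule gives `M sin θ · M cos θ = (M²/2) sin 2θ`.
-/

open Classical in

/-- `implicitSol M τ θ` is the unique real `u` with `u = M * cos (θ - τ * u)`
(which exists and is unique whenever `|M * τ| < 1`), and `0` otherwise. -/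
noncomputable def implicitSol (M τ θ : ℝ) : ℝ :=
  if h : ∃! u : ℝ, u = M * Real.cos (θ - τ * u) then h.choose else 0

open Real Filter Topology

theorem ContractingWith.existsUnique_isFixedPt {α : Type*} [MetricSpace α] [CompleteSpace α]
    [Nonempty α] {K : NNReal} {f : α → α} (hf : ContractingWith K f) :
    ∃! x, Function.IsFixedPt f x :=
  ⟨fixedPoint f hf, hf.fixedPoint_isFixedPt, fun _ hx => hf.fixedPoint_unique hx⟩

theorem hasDerivAt_sub_smul_of_continuousAt {𝕜 F : Type*} [NontriviallyNormedField 𝕜]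
    [NormedAddCommGroup F] [NormedSpace 𝕜 F] {g : 𝕜 → F} {a : 𝕜} (hg : ContinuousAt g a) :
    HasDerivAt (fun x => (x - a) • g x) (g a) a := by
  rw [hasDerivAt_iff_tendsto_slope]
  refine (hg.tendsto.mono_left nhdsWithin_le_nhds).congr' ?_
  filter_upwards [self_mem_nhdsWithin] with x hx
  rw [slope_def_module, sub_self, zero_smul, sub_zero, smul_smul,
    inv_mul_cancel₀ (sub_ne_zero.2 hx), one_smul]

theorem lipschitzWith_mul_cos_sub_mul (M τ θ : ℝ) :
    LipschitzWith ‖M * τ‖₊ fun u => M * cos (θ - τ * u) := by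
  refine LipschitzWith.of_dist_le_mul fun u v => ?_
  calc dist (M * cos (θ - τ * u)) (M * cos (θ - τ * v))
      = |M| * |cos (θ - τ * u) - cos (θ - τ * v)| := by rw [dist_eq, ← mul_sub, abs_mul]
    _ ≤ |M| * |θ - τ * u - (θ - τ * v)| :=
        mul_le_mul_of_nonneg_left (abs_cos_sub_cos_le _ _) (abs_nonneg M)
    _ = ‖M * τ‖₊ * dist u v := by
        rw [show θ - τ * u - (θ - τ * v) = τ * (v - u) by ring, coe_nnnorm, norm_mul, dist_eq,
          norm_eq_abs, norm_eq_abs, abs_mul, abs_sub_comm, mul_assoc]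

theorem existsUnique_eq_mul_cos_sub_mul {M τ : ℝ} (θ : ℝ) (h : |M * τ| < 1) :
    ∃! u : ℝ, u = M * cos (θ - τ * u) := by
  have hf : ContractingWith ‖M * τ‖₊ fun u => M * cos (θ - τ * u) :=
    ⟨by rwa [← NNReal.coe_lt_coe, coe_nnnorm, norm_eq_abs, NNReal.coe_one],
      lipschitzWith_mul_cos_sub_mul M τ θ⟩
  simpa only [Function.IsFixedPt, eq_comm] using hf.existsUnique_isFixedPt

theorem implicitSol_eq {M τ : ℝ} (θ : ℝ) (h : |M * τ| < 1) :
    implicitSol M τ θ = M * cos (θ - τ * implicitSol M τ θ) := by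
  have he := existsUnique_eq_mul_cos_sub_mul θ h
  rw [implicitSol, dif_pos he]
  exact he.choose_spec.1

theorem implicitSol_zero (M θ : ℝ) : implicitSol M 0 θ = M * cos θ := by
  simpa using implicitSol_eq (M := M) (τ := 0) θ (by simp)

theorem abs_implicitSol_le (M τ θ : ℝ) : |implicitSol M τ θ| ≤ |M| := by
  rw [implicitSol]
  split_ifs with h
  · rw [h.choose_spec.1, abs_mul]
    exact mul_le_of_le_one_right (abs_nonneg M) (abs_cos_le_one _)
  · simp

theorem eventually_abs_mul_lt_one (M : ℝ) : ∀ᶠ τ in 𝓝 0, |M * τ| < 1 :=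
  ((continuous_const.mul continuous_id).abs.tendsto' 0 0 (by simp)).eventually
    (gt_mem_nhds one_pos)

theorem continuousAt_implicitSol_zero (M θ : ℝ) :
    ContinuousAt (fun τ => implicitSol M τ θ) 0 := by
  have hτu : Tendsto (fun τ => τ * implicitSol M τ θ) (𝓝 0) (𝓝 0) :=
    tendsto_id.zero_mul_isBoundedUnder_le
      (isBoundedUnder_of ⟨|M|, fun τ => abs_implicitSol_le M τ θ⟩)
  have hcos : Tendsto (fun τ => M * cos (θ - τ * implicitSol M τ θ)) (𝓝 0)
      (𝓝 (M * cos θ)) := by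
    have hcont : Continuous fun s => M * cos (θ - s) := by fun_prop
    simpa [Function.comp_def] using (hcont.tendsto 0).comp hτu
  refine (implicitSol_zero M θ ▸ hcos).congr' ?_
  filter_upwards [eventually_abs_mul_lt_one M] with τ h using (implicitSol_eq θ h).symm

/-- For fixed `θ`, the map `τ ↦ u_{M,τ}(θ)` (with `u_{M,τ}` the unique
solution of the implicit equation `u = M * cos (θ - τ * u)`, valid for `|M * τ| < 1`) is
differentiable at `τ = 0`, with `u_{M,0}(θ) = M * cos θ` and derivative `(M²/2) * sin (2θ)`
(the second harmonic). -/
theorem implicitSol_deriv_at_zero (M θ : ℝ) :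
    implicitSol M 0 θ = M * Real.cos θ ∧
      HasDerivAt (fun τ : ℝ => implicitSol M τ θ) (M ^ 2 / 2 * Real.sin (2 * θ)) 0 := by
  have hτu : HasDerivAt (fun τ => τ * implicitSol M τ θ) (M * cos θ) 0 := by
    simpa [implicitSol_zero] using
      hasDerivAt_sub_smul_of_continuousAt (continuousAt_implicitSol_zero M θ)
  have hrhs : HasDerivAt (fun τ => M * cos (θ - τ * implicitSol M τ θ))
      (M ^ 2 / 2 * sin (2 * θ)) 0 := by
    refine (((hτu.const_sub θ).cos).const_mul M).congr_deriv ?_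
    rw [zero_mul, sub_zero, sin_two_mul]
    ring
  refine ⟨implicitSol_zero M θ, hrhs.congr_of_eventuallyEq ?_⟩
  filter_upwards [eventually_abs_mul_lt_one M] with τ h using implicitSol_eq θ h
end

section
/- Let n ≥ 1, ω ∈ ℝⁿ a unit vector, T > 0, α ∈ C^∞(ℝⁿ) bounded, and let U ∈ C^∞(ℝ × ℝⁿ × ℝ) be 2π-periodic in its third variable θ, with U and all its partial derivatives up to order 2 bounded on [0,T] × ℝⁿ × ℝ, and suppose U solves the profile equation (∂_t + ω·∇_x)U + α(x)·U·∂_θ U = 0. Set φ(t,x) = −t + x·ω and p_h(t,x) = h·U(t,x,φ(t,x)/h). Then there exists a constant C such that for all h ∈ (0,1], sup over (t,x) ∈ [0,T] × ℝⁿ of |∂_t² p_h − Δ_x p_h − α(x)·∂_t²(p_h²)| is at most C·h. -/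
section helpers
variable {Z F : Type*} [NormedAddCommGroup Z] [NormedSpace ℝ Z]
  [NormedAddCommGroup F] [NormedSpace ℝ F]

lemma hasDerivAt_line (V : Z → F) (hV : Differentiable ℝ V) (q₀ v : Z) (s : ℝ) :
    HasDerivAt (fun s : ℝ => V (q₀ + s • v)) (fderiv ℝ V (q₀ + s • v) v) s := by
  have hγ : HasDerivAt (fun s : ℝ => q₀ + s • v) v s := by
    simpa using ((hasDerivAt_id s).smul_const v).const_add q₀
  exact (hV _).hasFDerivAt.comp_hasDerivAt s hγ

lemma hasDerivAt_line2 (V : Z → ℝ) (hV : ContDiff ℝ 2 V) (q₀ v u : Z) (s : ℝ) :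
    HasDerivAt (fun s : ℝ => fderiv ℝ V (q₀ + s • v) u)
      (fderiv ℝ (fderiv ℝ V) (q₀ + s • v) v u) s := by
  have hd : Differentiable ℝ (fderiv ℝ V) :=
    (hV.fderiv_right (m := 1) (by norm_num)).differentiable one_ne_zero
  have h1 := hasDerivAt_line (fderiv ℝ V) hd q₀ v s
  have h2 := h1.clm_apply (hasDerivAt_const s u)
  simpa using h2

lemma line_deriv2 (V : Z → ℝ) (hV : ContDiff ℝ 2 V) (c : ℝ) (q₀ v : Z) (s : ℝ) :
    deriv (deriv (fun s : ℝ => c * V (q₀ + s • v))) s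
      = c * fderiv ℝ (fderiv ℝ V) (q₀ + s • v) v v := by
  have e : deriv (fun s : ℝ => c * V (q₀ + s • v))
      = fun s : ℝ => c * fderiv ℝ V (q₀ + s • v) v :=
    funext fun s =>
      (((hasDerivAt_line V (hV.differentiable two_ne_zero) q₀ v s).const_mul c)).deriv
  rw [e]
  exact ((hasDerivAt_line2 V hV q₀ v v s).const_mul c).deriv

lemma line_deriv2_sq (V : Z → ℝ) (hV : ContDiff ℝ 2 V) (c : ℝ) (q₀ v : Z) (s : ℝ) :
    deriv (deriv (fun s : ℝ => (c * V (q₀ + s • v)) ^ 2)) s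
      = 2 * c ^ 2 * (fderiv ℝ V (q₀ + s • v) v * fderiv ℝ V (q₀ + s • v) v
          + V (q₀ + s • v) * fderiv ℝ (fderiv ℝ V) (q₀ + s • v) v v) := by
  have hVd := hV.differentiable two_ne_zero
  have e : deriv (fun s : ℝ => (c * V (q₀ + s • v)) ^ 2)
      = fun s : ℝ => 2 * c ^ 2 * (V (q₀ + s • v) * fderiv ℝ V (q₀ + s • v) v) := by
    funext s
    have h1 := (hasDerivAt_line V hVd q₀ v s).const_mul c
    have h2 := h1.mul h1
    have e2 : (fun s : ℝ => (c * V (q₀ + s • v)) ^ 2)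
        = fun s : ℝ => (c * V (q₀ + s • v)) * (c * V (q₀ + s • v)) :=
      funext fun s => sq (c * V (q₀ + s • v))
    rw [e2]; exact h2.deriv.trans (by ring)
  rw [e]
  exact (((hasDerivAt_line V hVd q₀ v s).mul
    (hasDerivAt_line2 V hV q₀ v v s)).const_mul (2 * c ^ 2)).deriv

end helpers

set_option maxHeartbeats 4000000 in
/-- (The WKB ansatz is an `O(h)` approximate solution of the Westervelt
equation.) Let `ω ∈ ℝⁿ` be a unit vector, `T > 0`, `α ∈ C^∞(ℝⁿ)` bounded, and let
`U ∈ C^∞(ℝ × ℝⁿ × ℝ)` be `2π`-periodic in its third variable, with `U` and all its partial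
derivatives up to order `2` bounded on `[0,T] × ℝⁿ × ℝ`, solving the profile equation
`(∂ₜ + ω·∇ₓ)U + α U ∂_θU = 0`. With `φ(t,x) = -t + x·ω` and `P h t x = h U(t,x,φ(t,x)/h)`,
there is a constant `C` such that for all `h ∈ (0,1]`,
`sup_{[0,T] × ℝⁿ} |∂ₜ²(P h) - Δₓ(P h) - α ∂ₜ²((P h)²)| ≤ C h`. -/
theorem westervelt_ansatz_approximate (n : ℕ) (hn : 1 ≤ n)
    (ω : EuclideanSpace ℝ (Fin n)) (hω : ‖ω‖ = 1) (T : ℝ) (hT : 0 < T)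
    (α : EuclideanSpace ℝ (Fin n) → ℝ) (hα : ContDiff ℝ (⊤ : ℕ∞) α)
    (hαbd : ∃ Cα : ℝ, ∀ x, |α x| ≤ Cα)
    (U : ℝ → EuclideanSpace ℝ (Fin n) → ℝ → ℝ)
    (hU : ContDiff ℝ (⊤ : ℕ∞) (fun q : ℝ × EuclideanSpace ℝ (Fin n) × ℝ => U q.1 q.2.1 q.2.2))
    (hper : ∀ (t : ℝ) (x : EuclideanSpace ℝ (Fin n)),
      Function.Periodic (U t x) (2 * Real.pi))
    (hbd : ∃ C₀ : ℝ, ∀ k : ℕ, k ≤ 2 → ∀ t ∈ Set.Icc (0 : ℝ) T,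
      ∀ (x : EuclideanSpace ℝ (Fin n)) (θ : ℝ),
        ‖iteratedFDeriv ℝ k
            (fun q : ℝ × EuclideanSpace ℝ (Fin n) × ℝ => U q.1 q.2.1 q.2.2) (t, x, θ)‖ ≤ C₀)
    (hprof : ∀ (t : ℝ) (x : EuclideanSpace ℝ (Fin n)) (θ : ℝ),
      deriv (fun t' : ℝ => U t' x θ) t + deriv (fun s : ℝ => U t (x + s • ω) θ) 0
        + α x * U t x θ * deriv (fun θ' : ℝ => U t x θ') θ = 0)
    (φ : ℝ → EuclideanSpace ℝ (Fin n) → ℝ)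
    (hφ : ∀ t x, φ t x = -t + ∑ i, x i * ω i)
    (P : ℝ → ℝ → EuclideanSpace ℝ (Fin n) → ℝ)
    (hP : ∀ h t x, P h t x = h * U t x (φ t x / h)) :
    ∃ C : ℝ, ∀ h ∈ Set.Ioc (0 : ℝ) 1, ∀ t ∈ Set.Icc (0 : ℝ) T,
      ∀ x : EuclideanSpace ℝ (Fin n),
        |deriv (deriv (fun t' : ℝ => P h t' x)) t
            - (∑ i, deriv (deriv (fun s : ℝ => P h t (x + s • EuclideanSpace.single i 1))) 0)
            - α x * deriv (deriv (fun t' : ℝ => (P h t' x) ^ 2)) t| ≤ C * h := by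
    classical
  obtain ⟨Cα, hCα⟩ := hαbd
  obtain ⟨C₀, hC₀⟩ := hbd
  set V : ℝ × EuclideanSpace ℝ (Fin n) × ℝ → ℝ :=
    fun q => U q.1 q.2.1 q.2.2 with hVdef
  have hV2 : ContDiff ℝ 2 V := hU.of_le (WithTop.coe_le_coe.mpr le_top)
  have hVd : Differentiable ℝ V := hV2.differentiable two_ne_zero
  set a : ℝ × EuclideanSpace ℝ (Fin n) × ℝ := (1, 0, 0) with ha
  set b : ℝ × EuclideanSpace ℝ (Fin n) × ℝ := (0, 0, 1) with hb
  set wo : ℝ × EuclideanSpace ℝ (Fin n) × ℝ := (0, ω, 0) with hwo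
  set ei : Fin n → ℝ × EuclideanSpace ℝ (Fin n) × ℝ :=
    fun i => (0, EuclideanSpace.single i 1, 0) with hei
  have prof' : ∀ (t : ℝ) (x : EuclideanSpace ℝ (Fin n)) (θ : ℝ),
      fderiv ℝ V (t, x, θ) a + fderiv ℝ V (t, x, θ) wo
        + α x * (V (t, x, θ) * fderiv ℝ V (t, x, θ) b) = 0 := by
    intro t x θ
    have h1 : deriv (fun t' : ℝ => U t' x θ) t = fderiv ℝ V (t, x, θ) a := by
      have e : (fun t' : ℝ => U t' x θ)
          = fun s : ℝ => V (((0 : ℝ), x, θ) + s • a) := by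
        funext s
        have e2 : ((0 : ℝ), x, θ) + s • a = (s, x, θ) := by
          rw [ha]; simp [Prod.ext_iff]
        rw [e2]
      rw [e, (hasDerivAt_line V hVd ((0 : ℝ), x, θ) a t).deriv]
      congr 1
      rw [ha]; simp [Prod.ext_iff]
    have h2 : deriv (fun s : ℝ => U t (x + s • ω) θ) 0 = fderiv ℝ V (t, x, θ) wo := by
      have e : (fun s : ℝ => U t (x + s • ω) θ)
          = fun s : ℝ => V ((t, x, θ) + s • wo) := by
        funext s
        have e2 : (t, x, θ) + s • wo = (t, x + s • ω, θ) := by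
          rw [hwo]; simp [Prod.ext_iff]
        rw [e2]
      rw [e, (hasDerivAt_line V hVd (t, x, θ) wo 0).deriv]
      congr 1
      simp
    have h3 : deriv (fun θ' : ℝ => U t x θ') θ = fderiv ℝ V (t, x, θ) b := by
      have e : (fun θ' : ℝ => U t x θ')
          = fun s : ℝ => V ((t, x, (0 : ℝ)) + s • b) := by
        funext s
        have e2 : (t, x, (0 : ℝ)) + s • b = (t, x, s) := by
          rw [hb]; simp [Prod.ext_iff]
        rw [e2]
      rw [e, (hasDerivAt_line V hVd (t, x, (0 : ℝ)) b θ).deriv]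
      congr 1
      rw [hb]; simp [Prod.ext_iff]
    have h0 := hprof t x θ
    rw [h1, h2, h3] at h0
    have hv : U t x θ = V (t, x, θ) := rfl
    rw [hv] at h0
    linear_combination h0
  have hrep : wo = ∑ i, ω i • ei i := by
    have h1 := (EuclideanSpace.basisFun (Fin n) ℝ).sum_repr ω
    simp only [EuclideanSpace.basisFun_apply, EuclideanSpace.basisFun_repr] at h1
    rw [hwo, hei]
    refine Prod.ext ?_ (Prod.ext ?_ ?_)
    · simp [Prod.fst_sum]
    · simp only [Prod.snd_sum, Prod.smul_snd, Prod.fst_sum, Prod.smul_fst]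
      exact h1.symm
    · simp [Prod.snd_sum]
  have hω2 : ∑ i, ω i ^ 2 = 1 := by
    have h1 := EuclideanSpace.norm_eq ω
    rw [hω] at h1
    have h2 : ∑ i, ‖ω i‖ ^ 2 = 1 := Real.sqrt_eq_one.mp h1.symm
    simpa [Real.norm_eq_abs, sq_abs] using h2
  refine ⟨(n + 1) * C₀ + 12 * Cα * C₀ ^ 2, ?_⟩
  rintro h ⟨hpos, hle⟩ t ht x
  have hne : h ≠ 0 := ne_of_gt hpos
  have hμ : h * (1 / h) = 1 := by field_simp
  set c : ℝ := ∑ i, x i * ω i with hc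
  set θq : ℝ := (-t + c) / h with hθq
  set q : ℝ × EuclideanSpace ℝ (Fin n) × ℝ := (t, x, θq) with hq
  set vt : ℝ × EuclideanSpace ℝ (Fin n) × ℝ := a + (-(1 / h)) • b with hvt
  set vi : Fin n → ℝ × EuclideanSpace ℝ (Fin n) × ℝ :=
    fun i => ei i + (ω i * (1 / h)) • b with hvi
  -- bounds at q
  have hb0 : |V q| ≤ C₀ := by
    have h0 := hC₀ 0 (by norm_num) t ht x θq
    rw [norm_iteratedFDeriv_zero, Real.norm_eq_abs] at h0
    simpa [← hq] using h0
  have hb1 : ∀ u, |fderiv ℝ V q u| ≤ C₀ * ‖u‖ := by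
    intro u
    have h0 := hC₀ 1 (by norm_num) t ht x θq
    have e : fderiv ℝ V q u = iteratedFDeriv ℝ 1 V (t, x, θq) ![u] := by
      rw [iteratedFDeriv_one_apply]
      simp [← hq]
    have h2 : ‖iteratedFDeriv ℝ 1 V (t, x, θq) ![u]‖ ≤ C₀ * ‖u‖ := by
      refine le_trans ((iteratedFDeriv ℝ 1 V (t, x, θq)).le_opNorm ![u]) ?_
      have e3 : ∏ i, ‖(![u] : Fin 1 → ℝ × EuclideanSpace ℝ (Fin n) × ℝ) i‖ = ‖u‖ := by
        simp
      rw [e3]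
      exact mul_le_mul_of_nonneg_right h0 (norm_nonneg u)
    rw [e, ← Real.norm_eq_abs]
    exact h2
  have hb2 : ∀ u w, |fderiv ℝ (fderiv ℝ V) q u w| ≤ C₀ * ‖u‖ * ‖w‖ := by
    intro u w
    have h0 := hC₀ 2 (by norm_num) t ht x θq
    have e : fderiv ℝ (fderiv ℝ V) q u w = iteratedFDeriv ℝ 2 V (t, x, θq) ![u, w] := by
      rw [iteratedFDeriv_two_apply]
      simp [← hq]
    have h2 : ‖iteratedFDeriv ℝ 2 V (t, x, θq) ![u, w]‖ ≤ C₀ * ‖u‖ * ‖w‖ := by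
      refine le_trans ((iteratedFDeriv ℝ 2 V (t, x, θq)).le_opNorm ![u, w]) ?_
      have e3 : ∏ i, ‖(![u, w] : Fin 2 → ℝ × EuclideanSpace ℝ (Fin n) × ℝ) i‖
          = ‖u‖ * ‖w‖ := by
        simp [Fin.prod_univ_two]
      rw [e3, ← mul_assoc]
      exact mul_le_mul_of_nonneg_right
        (mul_le_mul_of_nonneg_right h0 (norm_nonneg u)) (norm_nonneg w)
    rw [e, ← Real.norm_eq_abs]
    exact h2
  have hna : ‖a‖ = 1 := by rw [ha]; simp [Prod.norm_def]
  have hnb : ‖b‖ = 1 := by rw [hb]; simp [Prod.norm_def]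
  have hnei : ∀ i, ‖ei i‖ = 1 := by
    intro i
    rw [hei]
    simp [Prod.norm_def, EuclideanSpace.norm_single]
  have hsymm : ∀ u w, fderiv ℝ (fderiv ℝ V) q u w = fderiv ℝ (fderiv ℝ V) q w u :=
    fun u w => (hU.contDiffAt.isSymmSndFDerivAt (by rw [minSmoothness_of_isRCLikeNormedField]; exact WithTop.coe_le_coe.mpr le_top)) u w
  -- phase computation for the spatial paths
  have hsumx : ∀ (s : ℝ) (i : Fin n),
      ∑ j, (x + s • EuclideanSpace.single i (1:ℝ)) j * ω j = c + s * ω i := by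
    intro s i
    have e : ∀ j : Fin n, (x + s • EuclideanSpace.single i (1 : ℝ)) j * ω j
        = x j * ω j + (if j = i then s * ω j else 0) := by
      intro j
      by_cases hj : j = i <;>
        simp [PiLp.add_apply, PiLp.smul_apply, EuclideanSpace.single_apply, hj] <;> ring
    rw [Finset.sum_congr rfl (fun j _ => e j), Finset.sum_add_distrib,
      Finset.sum_ite_eq' Finset.univ i (fun j => s * ω j)]
    simp [hc]
  -- differentiated profile equation at q
  have hq0 : ∀ s : ℝ, q + s • b = (t, x, θq + s) := by
    intro s
    rw [hq, hb]; simp [Prod.ext_iff]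
  have keyq : fderiv ℝ (fderiv ℝ V) q b a + fderiv ℝ (fderiv ℝ V) q b wo
      + α x * (fderiv ℝ V q b * fderiv ℝ V q b
        + V q * fderiv ℝ (fderiv ℝ V) q b b) = 0 := by
    have H1 := hasDerivAt_line2 V hV2 q b a 0
    have H2 := hasDerivAt_line2 V hV2 q b wo 0
    have H3 := ((hasDerivAt_line V hVd q b 0).mul
      (hasDerivAt_line2 V hV2 q b b 0)).const_mul (α x)
    have H := (H1.add H2).add H3
    simp only [zero_smul, add_zero] at H
    have hg : (fun s : ℝ => fderiv ℝ V (q + s • b) a + fderiv ℝ V (q + s • b) wo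
        + α x * (V (q + s • b) * fderiv ℝ V (q + s • b) b)) = fun _ : ℝ => (0 : ℝ) := by
      funext s
      rw [hq0 s]
      exact prof' t x (θq + s)
    replace H : HasDerivAt (fun s : ℝ => fderiv ℝ V (q + s • b) a + fderiv ℝ V (q + s • b) wo
        + α x * (V (q + s • b) * fderiv ℝ V (q + s • b) b)) _ 0 := H
    rw [hg] at H
    exact H.unique (hasDerivAt_const 0 0)
  have hSb : fderiv ℝ (fderiv ℝ V) q b wo
      = ∑ i, ω i * fderiv ℝ (fderiv ℝ V) q b (ei i) := by
    rw [hrep, map_sum]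
    simp [smul_eq_mul]
  have key2 : ∑ i, ω i * fderiv ℝ (fderiv ℝ V) q b (ei i)
      = -(fderiv ℝ (fderiv ℝ V) q b a)
        - α x * (fderiv ℝ V q b * fderiv ℝ V q b
          + V q * fderiv ℝ (fderiv ℝ V) q b b) := by
    rw [← hSb]; linarith [keyq]
  -- the three second-derivative computations
  have etime : (fun t' : ℝ => P h t' x)
      = fun s : ℝ => h * V (((0 : ℝ), x, c * (1 / h)) + s • vt) := by
    funext s
    rw [hP, hφ, ← hc]
    congr 1
    have e2 : ((0 : ℝ), x, c * (1 / h)) + s • vt = (s, x, (-s + c) / h) := by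
      rw [hvt, ha, hb]
      refine Prod.ext ?_ (Prod.ext ?_ ?_) <;> simp <;> ring
    rw [e2]
  have ept : ((0 : ℝ), x, c * (1 / h)) + t • vt = q := by
    rw [hvt, ha, hb, hq, hθq]
    refine Prod.ext ?_ (Prod.ext ?_ ?_) <;> simp <;> ring
  have e1 : deriv (deriv (fun t' : ℝ => P h t' x)) t
      = h * fderiv ℝ (fderiv ℝ V) q vt vt := by
    rw [etime, line_deriv2 V hV2 h ((0 : ℝ), x, c * (1 / h)) vt t, ept]
  have e3 : deriv (deriv (fun t' : ℝ => (P h t' x) ^ 2)) t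
      = 2 * h ^ 2 * (fderiv ℝ V q vt * fderiv ℝ V q vt
        + V q * fderiv ℝ (fderiv ℝ V) q vt vt) := by
    have e : (fun t' : ℝ => (P h t' x) ^ 2)
        = fun s : ℝ => (h * V (((0 : ℝ), x, c * (1 / h)) + s • vt)) ^ 2 := by
      funext s
      rw [congrFun etime s]
    rw [e, line_deriv2_sq V hV2 h ((0 : ℝ), x, c * (1 / h)) vt t, ept]
  have espat : ∀ i, deriv (deriv
        (fun s : ℝ => P h t (x + s • EuclideanSpace.single i 1))) 0
      = h * fderiv ℝ (fderiv ℝ V) q (vi i) (vi i) := by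
    intro i
    have e : (fun s : ℝ => P h t (x + s • EuclideanSpace.single i 1))
        = fun s : ℝ => h * V (q + s • vi i) := by
      funext s
      rw [hP, hφ, hsumx s i]
      congr 1
      have e2 : q + s • vi i = (t, x + s • EuclideanSpace.single i 1,
          (-t + (c + s * ω i)) / h) := by
        rw [hq, hθq, hvi, hei, hb]
        refine Prod.ext ?_ (Prod.ext ?_ ?_) <;> simp <;> ring
      rw [e2]
    have ept0 : q + (0 : ℝ) • vi i = q := by simp
    rw [e, line_deriv2 V hV2 h q (vi i) 0, ept0]
  -- bilinear expansions
  have evt1 : fderiv ℝ V q vt = fderiv ℝ V q a - (1 / h) * fderiv ℝ V q b := by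
    rw [hvt]
    simp only [map_add, map_smul, smul_eq_mul]
    ring
  have evt2 : fderiv ℝ (fderiv ℝ V) q vt vt
      = fderiv ℝ (fderiv ℝ V) q a a
        - (1 / h) * fderiv ℝ (fderiv ℝ V) q b a
        - (1 / h) * fderiv ℝ (fderiv ℝ V) q b a
        + (1 / h) ^ 2 * fderiv ℝ (fderiv ℝ V) q b b := by
    rw [hvt]
    simp only [map_add, map_smul, ContinuousLinearMap.add_apply,
      ContinuousLinearMap.smul_apply, smul_eq_mul]
    rw [hsymm a b]
    ring
  have evi2 : ∀ i, fderiv ℝ (fderiv ℝ V) q (vi i) (vi i)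
      = fderiv ℝ (fderiv ℝ V) q (ei i) (ei i)
        + (ω i * (1 / h)) * fderiv ℝ (fderiv ℝ V) q b (ei i)
        + (ω i * (1 / h)) * fderiv ℝ (fderiv ℝ V) q b (ei i)
        + (ω i * (1 / h)) ^ 2 * fderiv ℝ (fderiv ℝ V) q b b := by
    intro i
    rw [hvi]
    simp only [map_add, map_smul, ContinuousLinearMap.add_apply,
      ContinuousLinearMap.smul_apply, smul_eq_mul]
    rw [hsymm (ei i) b]
    ring
  have esum0 : (∑ i, deriv (deriv
        (fun s : ℝ => P h t (x + s • EuclideanSpace.single i 1))) 0)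
      = ∑ i, h * fderiv ℝ (fderiv ℝ V) q (vi i) (vi i) :=
    Finset.sum_congr rfl fun i _ => espat i
  have esum : ∑ i, h * fderiv ℝ (fderiv ℝ V) q (vi i) (vi i)
      = h * (∑ i, fderiv ℝ (fderiv ℝ V) q (ei i) (ei i))
        + 2 * (∑ i, ω i * fderiv ℝ (fderiv ℝ V) q b (ei i))
        + (1 / h) * fderiv ℝ (fderiv ℝ V) q b b := by
    have e : ∀ i : Fin n, h * fderiv ℝ (fderiv ℝ V) q (vi i) (vi i)
        = h * fderiv ℝ (fderiv ℝ V) q (ei i) (ei i)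
          + 2 * (ω i * fderiv ℝ (fderiv ℝ V) q b (ei i))
          + (ω i) ^ 2 * ((1 / h) * fderiv ℝ (fderiv ℝ V) q b b) := by
      intro i
      rw [evi2 i]
      linear_combination (2 * ω i * fderiv ℝ (fderiv ℝ V) q b (ei i)
        + (ω i) ^ 2 * (1 / h) * fderiv ℝ (fderiv ℝ V) q b b) * hμ
    rw [Finset.sum_congr rfl fun i _ => e i, Finset.sum_add_distrib,
      Finset.sum_add_distrib, ← Finset.mul_sum, ← Finset.mul_sum, ← Finset.sum_mul,
      hω2]
    ring
  -- the exact residual identity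
  have hfin : deriv (deriv (fun t' : ℝ => P h t' x)) t
      - (∑ i, deriv (deriv
          (fun s : ℝ => P h t (x + s • EuclideanSpace.single i 1))) 0)
      - α x * deriv (deriv (fun t' : ℝ => (P h t' x) ^ 2)) t
      = h * (fderiv ℝ (fderiv ℝ V) q a a
          - (∑ i, fderiv ℝ (fderiv ℝ V) q (ei i) (ei i))
          - α x * (2 * h * fderiv ℝ V q a * fderiv ℝ V q a
            - 4 * fderiv ℝ V q a * fderiv ℝ V q b
            + 2 * h * V q * fderiv ℝ (fderiv ℝ V) q a a
            - 4 * V q * fderiv ℝ (fderiv ℝ V) q b a)) := by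
    rw [e1, esum0, esum, e3, evt2, evt1, key2]
    linear_combination (-2 * fderiv ℝ (fderiv ℝ V) q b a
      + (1 / h) * fderiv ℝ (fderiv ℝ V) q b b
      - 2 * α x * (fderiv ℝ V q b * fderiv ℝ V q b) * (h * (1 / h) + 1)
      - 2 * α x * (V q * fderiv ℝ (fderiv ℝ V) q b b) * (h * (1 / h) + 1)
      + 4 * α x * h * (fderiv ℝ V q a * fderiv ℝ V q b)
      + 4 * α x * h * (V q * fderiv ℝ (fderiv ℝ V) q b a)) * hμ
  -- numerical bounds
  have hC₀nn : 0 ≤ C₀ := le_trans (abs_nonneg _) hb0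
  have hCαnn : 0 ≤ Cα := le_trans (abs_nonneg _) (hCα x)
  have hAq : |fderiv ℝ (fderiv ℝ V) q a a| ≤ C₀ := by
    have := hb2 a a
    rwa [hna, mul_one, mul_one] at this
  have hBa : |fderiv ℝ (fderiv ℝ V) q b a| ≤ C₀ := by
    have := hb2 b a
    rwa [hna, hnb, mul_one, mul_one] at this
  have hDa : |fderiv ℝ V q a| ≤ C₀ := by
    have := hb1 a
    rwa [hna, mul_one] at this
  have hDb : |fderiv ℝ V q b| ≤ C₀ := by
    have := hb1 b
    rwa [hnb, mul_one] at this
  have hS1 : |∑ i, fderiv ℝ (fderiv ℝ V) q (ei i) (ei i)| ≤ n * C₀ := by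
    refine le_trans (Finset.abs_sum_le_sum_abs _ _) ?_
    have e : ∀ i : Fin n, |fderiv ℝ (fderiv ℝ V) q (ei i) (ei i)| ≤ C₀ := by
      intro i
      have := hb2 (ei i) (ei i)
      rwa [hnei i, mul_one, mul_one] at this
    refine le_trans (Finset.sum_le_sum fun i _ => e i) ?_
    simp [Finset.sum_const, Finset.card_univ]
  have habs_sub : ∀ u v : ℝ, |u - v| ≤ |u| + |v| := by
    intro u v
    rw [sub_eq_add_neg]
    exact le_trans (abs_add_le _ _) (by rw [abs_neg])
  have hM : |2 * h * fderiv ℝ V q a * fderiv ℝ V q a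
      - 4 * fderiv ℝ V q a * fderiv ℝ V q b
      + 2 * h * V q * fderiv ℝ (fderiv ℝ V) q a a
      - 4 * V q * fderiv ℝ (fderiv ℝ V) q b a| ≤ 12 * C₀ ^ 2 := by
    have habsh : |h| = h := abs_of_pos hpos
    have q1 : |2 * h * fderiv ℝ V q a * fderiv ℝ V q a| ≤ 2 * C₀ ^ 2 := by
      rw [abs_mul, abs_mul, abs_mul, habsh, show |(2:ℝ)| = 2 from by norm_num]
      have := abs_nonneg (fderiv ℝ V q a)
      nlinarith [hDa, mul_le_mul hDa hDa (abs_nonneg _) hC₀nn]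
    have q2 : |4 * fderiv ℝ V q a * fderiv ℝ V q b| ≤ 4 * C₀ ^ 2 := by
      rw [abs_mul, abs_mul, show |(4:ℝ)| = 4 from by norm_num]
      have h1 := abs_nonneg (fderiv ℝ V q a)
      have h2 := abs_nonneg (fderiv ℝ V q b)
      nlinarith [hDa, hDb, mul_le_mul hDa hDb (abs_nonneg _) hC₀nn]
    have q3 : |2 * h * V q * fderiv ℝ (fderiv ℝ V) q a a| ≤ 2 * C₀ ^ 2 := by
      rw [abs_mul, abs_mul, abs_mul, habsh, show |(2:ℝ)| = 2 from by norm_num]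
      have h1 := abs_nonneg (V q)
      have h2 := abs_nonneg (fderiv ℝ (fderiv ℝ V) q a a)
      nlinarith [hb0, hAq, mul_le_mul hb0 hAq (abs_nonneg _) hC₀nn]
    have q4 : |4 * V q * fderiv ℝ (fderiv ℝ V) q b a| ≤ 4 * C₀ ^ 2 := by
      rw [abs_mul, abs_mul, show |(4:ℝ)| = 4 from by norm_num]
      have h1 := abs_nonneg (V q)
      have h2 := abs_nonneg (fderiv ℝ (fderiv ℝ V) q b a)
      nlinarith [hb0, hBa, mul_le_mul hb0 hBa (abs_nonneg _) hC₀nn]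
    calc |2 * h * fderiv ℝ V q a * fderiv ℝ V q a
        - 4 * fderiv ℝ V q a * fderiv ℝ V q b
        + 2 * h * V q * fderiv ℝ (fderiv ℝ V) q a a
        - 4 * V q * fderiv ℝ (fderiv ℝ V) q b a|
        ≤ |2 * h * fderiv ℝ V q a * fderiv ℝ V q a
            - 4 * fderiv ℝ V q a * fderiv ℝ V q b
            + 2 * h * V q * fderiv ℝ (fderiv ℝ V) q a a|
          + |4 * V q * fderiv ℝ (fderiv ℝ V) q b a| := habs_sub _ _
      _ ≤ (|2 * h * fderiv ℝ V q a * fderiv ℝ V q a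
            - 4 * fderiv ℝ V q a * fderiv ℝ V q b|
          + |2 * h * V q * fderiv ℝ (fderiv ℝ V) q a a|)
          + |4 * V q * fderiv ℝ (fderiv ℝ V) q b a| := by
          exact add_le_add_left (abs_add_le _ _) _
      _ ≤ ((|2 * h * fderiv ℝ V q a * fderiv ℝ V q a|
            + |4 * fderiv ℝ V q a * fderiv ℝ V q b|)
          + |2 * h * V q * fderiv ℝ (fderiv ℝ V) q a a|)
          + |4 * V q * fderiv ℝ (fderiv ℝ V) q b a| := by
          exact add_le_add_left (add_le_add_left (habs_sub _ _) _) _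
      _ ≤ 12 * C₀ ^ 2 := by linarith
  have hR : |fderiv ℝ (fderiv ℝ V) q a a
      - (∑ i, fderiv ℝ (fderiv ℝ V) q (ei i) (ei i))
      - α x * (2 * h * fderiv ℝ V q a * fderiv ℝ V q a
        - 4 * fderiv ℝ V q a * fderiv ℝ V q b
        + 2 * h * V q * fderiv ℝ (fderiv ℝ V) q a a
        - 4 * V q * fderiv ℝ (fderiv ℝ V) q b a)|
      ≤ (n + 1) * C₀ + 12 * Cα * C₀ ^ 2 := by
    have t1 := habs_sub (fderiv ℝ (fderiv ℝ V) q a a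
      - (∑ i, fderiv ℝ (fderiv ℝ V) q (ei i) (ei i)))
      (α x * (2 * h * fderiv ℝ V q a * fderiv ℝ V q a
        - 4 * fderiv ℝ V q a * fderiv ℝ V q b
        + 2 * h * V q * fderiv ℝ (fderiv ℝ V) q a a
        - 4 * V q * fderiv ℝ (fderiv ℝ V) q b a))
    have t2 := habs_sub (fderiv ℝ (fderiv ℝ V) q a a)
      (∑ i, fderiv ℝ (fderiv ℝ V) q (ei i) (ei i))
    have t3 : |α x * (2 * h * fderiv ℝ V q a * fderiv ℝ V q a
        - 4 * fderiv ℝ V q a * fderiv ℝ V q b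
        + 2 * h * V q * fderiv ℝ (fderiv ℝ V) q a a
        - 4 * V q * fderiv ℝ (fderiv ℝ V) q b a)| ≤ Cα * (12 * C₀ ^ 2) := by
      rw [abs_mul]
      exact mul_le_mul (hCα x) hM (abs_nonneg _) hCαnn
    linarith
  rw [hfin, abs_mul, abs_of_pos hpos, mul_comm]
  exact mul_le_mul_of_nonneg_right hR hpos.le
end
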